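/- For an even symbol f on the unit circle (f_j = f_{−j}) and any n ≥ 1, the product of the two Toeplitz+Hankel determinants det(f_{j−k} + f_{j+k+1})_{j,k=0}^{n−1} · det(f_{j−k} − f_{j+k+1})_{j,k=0}^{n−1} equals (2^{2n²−2n}/π^{2n}) · D_n^H(f √((1+x)/(1−x))) · D_n^H(f √((1−x)/(1+x))), where both Hankel determinants use the substitution x = cos θ on [−1,1]. -/

import Mathlib

/-!
For an even `2π`-periodic symbol, `f_m = π⁻¹ ∫₀^π g(θ) cos(mθ) dθ`, and the sum-to-product
formulas give `cos((j-k)θ) ± cos((j+k+1)θ) = (1 ± cos θ) p_j(cos θ) p_k(cos θ)`, where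
`p_j = U_j ∓ U_{j-1}` are the Chebyshev polynomials of the third (`V`) and fourth (`W`) kind, of
degree `j` with leading coefficient `2^j`. Hence each Toeplitz+Hankel matrix is `π⁻¹ L M Lᵀ` with
`L` lower triangular, `det L = 2^(n(n-1)/2)`, and `M` the moment matrix of
`p ↦ ∫₀^π g(θ) (1 ± cos θ) p(cos θ) dθ`. The substitution `x = cos θ`, for which
`sin θ · √((1 ± x)/(1 ∓ x)) = 1 ± x`, turns `M` into the Hankel matrix of the weight
`g(arccos x) √((1 ± x)/(1 ∓ x))`.
-/

open MeasureTheory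

open scoped Real

/-- Fourier coefficient of a symbol `g(θ)` (standing for `g(e^{iθ})`). -/
noncomputable def circleCoeff (g : ℝ → ℂ) (j : ℤ) : ℂ :=
  (1 / (2 * (π : ℂ))) *
    ∫ θ in (0:ℝ)..(2 * π), g θ * Complex.exp (-(j * θ) * Complex.I)

/-- Hankel determinant of a weight `w` on `[-1,1]`. -/
noncomputable def hankelDet (w : ℝ → ℂ) (n : ℕ) : ℂ :=
  Matrix.det (Matrix.of fun j k : Fin n =>
    ∫ x in (-1:ℝ)..1, (x : ℂ)^((j : ℕ) + (k : ℕ)) * w x)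

open Polynomial Polynomial.Chebyshev Set

namespace Real

lemma sin_eq_two_mul_sin_half_mul_cos_half (θ : ℝ) : sin θ = 2 * sin (θ / 2) * cos (θ / 2) := by
  rw [← sin_two_mul, mul_div_cancel₀ θ two_ne_zero]

lemma one_add_cos_eq_two_mul_cos_half_sq (θ : ℝ) : 1 + cos θ = 2 * cos (θ / 2) ^ 2 := by
  rw [cos_sq, mul_div_cancel₀ θ two_ne_zero]; ring

lemma one_sub_cos_eq_two_mul_sin_half_sq (θ : ℝ) : 1 - cos θ = 2 * sin (θ / 2) ^ 2 := by
  rw [sin_sq, cos_sq, mul_div_cancel₀ θ two_ne_zero]; ring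

lemma cos_mem_Ioo_of_mem_Ioo {θ : ℝ} (hθ : θ ∈ Ioo 0 π) : cos θ ∈ Ioo (-1) 1 := by
  have := sin_pos_of_pos_of_lt_pi hθ.1 hθ.2
  have := sin_sq_add_cos_sq θ
  constructor <;> nlinarith

end Real

namespace Polynomial.Chebyshev

variable (R : Type*) [CommRing R]

noncomputable def V (n : ℕ) : R[X] := U R n - U R (n - 1)

noncomputable def W (n : ℕ) : R[X] := U R n + U R (n - 1)

variable {R} [IsDomain R] [NeZero (2 : R)]

lemma coeff_U_natCast_self (n : ℕ) : (U R n).coeff n = 2 ^ n := by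
  simpa only [leadingCoeff, natDegree_U_natCast] using leadingCoeff_U_natCast R n

lemma coeff_U_natCast_of_lt {n m : ℕ} (h : n < m) : (U R n).coeff m = 0 :=
  coeff_eq_zero_of_natDegree_lt (by rwa [natDegree_U_natCast])

lemma coeff_U_sub_one_of_le {n m : ℕ} (h : n ≤ m) : (U R (n - 1)).coeff m = 0 := by
  cases n with
  | zero => simp
  | succ k => simpa using coeff_U_natCast_of_lt (R := R) (by omega : k < m)

lemma natDegree_V_le (n : ℕ) : (V R n).natDegree ≤ n :=
  natDegree_le_iff_coeff_eq_zero.mpr fun _ hm => by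
    rw [V, coeff_sub, coeff_U_natCast_of_lt hm, coeff_U_sub_one_of_le hm.le, sub_zero]

lemma natDegree_W_le (n : ℕ) : (W R n).natDegree ≤ n :=
  natDegree_le_iff_coeff_eq_zero.mpr fun _ hm => by
    rw [W, coeff_add, coeff_U_natCast_of_lt hm, coeff_U_sub_one_of_le hm.le, add_zero]

lemma coeff_V_self (n : ℕ) : (V R n).coeff n = 2 ^ n := by
  rw [V, coeff_sub, coeff_U_natCast_self, coeff_U_sub_one_of_le le_rfl, sub_zero]

lemma coeff_W_self (n : ℕ) : (W R n).coeff n = 2 ^ n := by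
  rw [W, coeff_add, coeff_U_natCast_self, coeff_U_sub_one_of_le le_rfl, add_zero]

lemma V_real_cos {θ : ℝ} (hθ : Real.sin (θ / 2) ≠ 0) (n : ℕ) :
    (V ℝ n).eval (Real.cos θ) * Real.cos (θ / 2) = Real.cos ((2 * n + 1) * θ / 2) := by
  have hU := U_real_cos θ n
  have hU' := U_real_cos θ (n - 1)
  push_cast at hU hU'
  have hsin_mul : (V ℝ n).eval (Real.cos θ) * Real.sin θ
      = 2 * Real.sin (θ / 2) * Real.cos ((2 * n + 1) * θ / 2) := by
    rw [V, eval_sub, sub_mul, hU, hU', Real.sin_sub_sin]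
    ring_nf
  rw [Real.sin_eq_two_mul_sin_half_mul_cos_half] at hsin_mul
  apply mul_left_cancel₀ (mul_ne_zero two_ne_zero hθ)
  linear_combination hsin_mul

lemma W_real_cos {θ : ℝ} (hθ : Real.cos (θ / 2) ≠ 0) (n : ℕ) :
    (W ℝ n).eval (Real.cos θ) * Real.sin (θ / 2) = Real.sin ((2 * n + 1) * θ / 2) := by
  have hU := U_real_cos θ n
  have hU' := U_real_cos θ (n - 1)
  push_cast at hU hU'
  have hsin_mul : (W ℝ n).eval (Real.cos θ) * Real.sin θ
      = 2 * Real.cos (θ / 2) * Real.sin ((2 * n + 1) * θ / 2) := by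
    rw [W, eval_add, add_mul, hU, hU', Real.sin_add_sin]
    ring_nf
  rw [Real.sin_eq_two_mul_sin_half_mul_cos_half] at hsin_mul
  apply mul_left_cancel₀ (mul_ne_zero two_ne_zero hθ)
  linear_combination hsin_mul

lemma cos_sub_add_cos_add_one {θ : ℝ} (hθ : Real.sin (θ / 2) ≠ 0) (j k : ℕ) :
    Real.cos ((j - k) * θ) + Real.cos ((j + k + 1) * θ)
      = (1 + Real.cos θ) * ((V ℝ j).eval (Real.cos θ) * (V ℝ k).eval (Real.cos θ)) := by
  rw [Real.cos_add_cos, show ((j - k) * θ + (j + k + 1) * θ) / 2 = (2 * j + 1) * θ / 2 by ring,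
    show ((j - k) * θ - (j + k + 1) * θ) / 2 = -((2 * k + 1) * θ / 2) by ring, Real.cos_neg,
    ← V_real_cos hθ, ← V_real_cos hθ, Real.one_add_cos_eq_two_mul_cos_half_sq]
  ring

lemma cos_sub_sub_cos_add_one {θ : ℝ} (hθ : Real.cos (θ / 2) ≠ 0) (j k : ℕ) :
    Real.cos ((j - k) * θ) - Real.cos ((j + k + 1) * θ)
      = (1 - Real.cos θ) * ((W ℝ j).eval (Real.cos θ) * (W ℝ k).eval (Real.cos θ)) := by
  rw [Real.cos_sub_cos, show ((j - k) * θ + (j + k + 1) * θ) / 2 = (2 * j + 1) * θ / 2 by ring,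
    show ((j - k) * θ - (j + k + 1) * θ) / 2 = -((2 * k + 1) * θ / 2) by ring, Real.sin_neg,
    ← W_real_cos hθ, ← W_real_cos hθ, Real.one_sub_cos_eq_two_mul_sin_half_sq]
  ring

end Polynomial.Chebyshev

lemma Function.Periodic.intervalIntegral_eq_integral_add_comp_neg {E : Type*}
    [NormedAddCommGroup E] [NormedSpace ℝ E] {F : ℝ → E} {T : ℝ} (hF : Function.Periodic F T)
    (hint : IntervalIntegrable F volume 0 T) :
    ∫ x in 0..T, F x = ∫ x in 0..T / 2, (F x + F (-x)) := by
  have hmid : T / 2 ∈ uIcc 0 T := by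
    rw [mem_uIcc]; rcases le_total 0 T with h | h
    exacts [.inl ⟨by linarith, by linarith⟩, .inr ⟨by linarith, by linarith⟩]
  have hleft : IntervalIntegrable F volume 0 (T / 2) :=
    hint.mono_set (uIcc_subset_uIcc_left hmid)
  have hright : IntervalIntegrable F volume (T / 2) T :=
    hint.mono_set (uIcc_subset_uIcc_right hmid)
  have hreflect : ∀ x, F (T - x) = F (-x) := fun x => by rw [sub_eq_neg_add, hF]
  have hneg : IntervalIntegrable (fun x => F (-x)) volume 0 (T / 2) := by
    simpa [hreflect, show T - T / 2 = T / 2 by ring] using hright.symm.comp_sub_left T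
  rw [intervalIntegral.integral_add hleft hneg,
    ← intervalIntegral.integral_add_adjacent_intervals hleft hright]
  congr 1
  simp_rw [← hreflect]
  rw [intervalIntegral.integral_comp_sub_left, sub_zero, show T - T / 2 = T / 2 by ring]

lemma circleCoeff_eq_integral_cos {g : ℝ → ℂ}
    (hint : IntervalIntegrable g volume 0 (2 * π))
    (heven : ∀ θ, g (-θ) = g θ) (hper : Function.Periodic g (2 * π)) (m : ℤ) :
    circleCoeff g m = (π : ℂ)⁻¹ * ∫ θ in Ioo 0 π, g θ * Real.cos (m * θ) := by
  set F : ℝ → ℂ := fun θ => g θ * Complex.exp (-(m * θ) * Complex.I)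
  have hF : Function.Periodic F (2 * π) := fun θ => by
    simp only [F, hper θ]
    rw [show -((m : ℂ) * ((θ + 2 * π : ℝ) : ℂ)) * Complex.I
        = -(m * θ) * Complex.I + (-m : ℤ) * (2 * π * Complex.I) by push_cast; ring,
      Complex.exp_add, Complex.exp_int_mul_two_pi_mul_I, mul_one]
  have hsym : ∀ θ : ℝ, F θ + F (-θ) = 2 * (g θ * Real.cos (m * θ)) := fun θ => by
    simp only [F, heven, Complex.ofReal_cos]
    push_cast
    rw [mul_left_comm, Complex.two_cos]
    ring_nf
  rw [circleCoeff, hF.intervalIntegral_eq_integral_add_comp_neg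
    (hint.mul_continuousOn (by fun_prop)), mul_div_cancel_left₀ (π : ℝ) two_ne_zero]
  simp_rw [hsym]
  rw [intervalIntegral.integral_const_mul, intervalIntegral.integral_of_le Real.pi_pos.le,
    integral_Ioc_eq_integral_Ioo]
  field_simp

lemma det_map_mul_eq_prod_coeff_sq_mul_det_map_X_pow {R A : Type*} [CommRing R] [CommRing A]
    [Algebra R A] (ℓ : R[X] →ₗ[R] A) (P : ℕ → R[X]) (hP : ∀ j, (P j).natDegree ≤ j) (n : ℕ) :
    (Matrix.of fun j k : Fin n => ℓ (P j * P k)).det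
      = (∏ j : Fin n, algebraMap R A ((P j).coeff j)) ^ 2
        * (Matrix.of fun a b : Fin n => ℓ (X ^ ((a : ℕ) + b))).det := by
  set L : Matrix (Fin n) (Fin n) A := Matrix.of fun j a => algebraMap R A ((P j).coeff a)
  set H : Matrix (Fin n) (Fin n) A := Matrix.of fun a b : Fin n => ℓ (X ^ ((a : ℕ) + b))
  have hexpand : ∀ j : Fin n, P j = ∑ a : Fin n, (P j).coeff a • X ^ (a : ℕ) := fun j => by
    conv_lhs => rw [as_sum_range' (P j) n ((hP j).trans_lt j.isLt)]
    simp only [← Fin.sum_univ_eq_sum_range (fun a => monomial a ((P j).coeff a)),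
      smul_X_eq_monomial]
  have hgram : Matrix.of (fun j k : Fin n => ℓ (P j * P k)) = L * H * L.transpose := by
    ext j k
    rw [Matrix.of_apply, hexpand j, hexpand k, Finset.sum_mul_sum]
    simp only [smul_mul_smul_comm, ← pow_add, map_sum, map_smul]
    simp only [Algebra.smul_def, map_mul]
    simp only [Matrix.mul_apply, Matrix.transpose_apply, L, H, Matrix.of_apply, Finset.sum_mul]
    rw [Finset.sum_comm]
    refine Finset.sum_congr rfl fun a _ => Finset.sum_congr rfl fun b _ => by ring
  have hL : L.det = ∏ j : Fin n, algebraMap R A ((P j).coeff j) :=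
    L.det_of_isLowerTriangular fun j a (hja : j < a) => by
      simp [L, coeff_eq_zero_of_natDegree_lt ((hP j).trans_lt hja)]
  rw [hgram, Matrix.det_mul, Matrix.det_mul, Matrix.det_transpose, hL]
  ring

lemma IntervalIntegrable.integrableOn_Ioo_mul_ofReal {g : ℝ → ℂ}
    (hg : IntervalIntegrable g volume 0 π) {r : ℝ → ℝ} (hr : Continuous r) :
    IntegrableOn (fun θ => g θ * (r θ : ℂ)) (Ioo 0 π) :=
  (intervalIntegrable_iff_integrableOn_Ioo_of_le Real.pi_pos.le).mp
    (hg.mul_continuousOn (by fun_prop))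

noncomputable def cosIntegral (g : ℝ → ℂ) (hg : IntervalIntegrable g volume 0 π) :
    ℝ[X] →ₗ[ℝ] ℂ where
  toFun p := ∫ θ in Ioo 0 π, g θ * ((p.eval (Real.cos θ) : ℝ) : ℂ)
  map_add' p q := by
    simp only [eval_add, Complex.ofReal_add, mul_add]
    exact integral_add (hg.integrableOn_Ioo_mul_ofReal (by fun_prop))
      (hg.integrableOn_Ioo_mul_ofReal (by fun_prop))
  map_smul' c p := by
    simp only [eval_smul, smul_eq_mul, Complex.ofReal_mul, RingHom.id_apply,
      mul_left_comm _ (c : ℂ), integral_const_mul, Complex.real_smul]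

lemma cosIntegral_apply (g : ℝ → ℂ) (hg : IntervalIntegrable g volume 0 π) (p : ℝ[X]) :
    cosIntegral g hg p = ∫ θ in Ioo 0 π, g θ * ((p.eval (Real.cos θ) : ℝ) : ℂ) := rfl

lemma integral_Ioo_neg_one_one_eq_integral_cos (φ : ℝ → ℂ) :
    ∫ x in Ioo (-1) 1, φ x = ∫ θ in Ioo 0 π, Real.sin θ * φ (Real.cos θ) := by
  have h := integral_image_eq_integral_abs_deriv_smul measurableSet_Icc
    (fun θ _ => (Real.hasDerivAt_cos θ).hasDerivWithinAt) Real.injOn_cos φ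
  rw [Real.bijOn_cos.image_eq, integral_Icc_eq_integral_Ioo, integral_Icc_eq_integral_Ioo] at h
  rw [h]
  refine setIntegral_congr_fun measurableSet_Ioo fun θ hθ => ?_
  rw [abs_neg, abs_of_pos (Real.sin_pos_of_pos_of_lt_pi hθ.1 hθ.2), Complex.real_smul]

lemma hankelDet_eq_det_cosIntegral {g : ℝ → ℂ} (hg : IntervalIntegrable g volume 0 π)
    (φ : ℝ → ℝ) (q : ℝ[X]) (hφ : ∀ θ ∈ Ioo 0 π, Real.sin θ * φ (Real.cos θ) = q.eval (Real.cos θ))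
    (n : ℕ) :
    hankelDet (fun x => g (Real.arccos x) * (φ x : ℂ)) n
      = (Matrix.of fun a b : Fin n => cosIntegral g hg (q * X ^ ((a : ℕ) + b))).det := by
  unfold hankelDet
  congr 1
  ext a b
  rw [Matrix.of_apply, Matrix.of_apply, intervalIntegral.integral_of_le (by norm_num),
    integral_Ioc_eq_integral_Ioo, integral_Ioo_neg_one_one_eq_integral_cos, cosIntegral_apply]
  refine setIntegral_congr_fun measurableSet_Ioo fun θ hθ => ?_
  simp only [Real.arccos_cos hθ.1.le hθ.2.le, eval_mul, eval_pow, eval_X, ← hφ θ hθ]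
  push_cast
  ring

lemma sqrt_one_sub_sq_mul_sqrt_one_add_div_one_sub {x : ℝ} (h1 : -1 ≤ x) (h2 : x < 1) :
    √(1 - x ^ 2) * √((1 + x) / (1 - x)) = 1 + x := by
  have h2' : 1 - x ≠ 0 := by linarith
  rw [← Real.sqrt_mul (by nlinarith), show (1 - x ^ 2) * ((1 + x) / (1 - x)) = (1 + x) ^ 2 by
    field_simp; ring, Real.sqrt_sq (by linarith)]

lemma sin_mul_sqrt_one_add_cos_div_one_sub_cos {θ : ℝ} (hθ : θ ∈ Ioo 0 π) :
    Real.sin θ * √((1 + Real.cos θ) / (1 - Real.cos θ)) = 1 + Real.cos θ := by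
  obtain ⟨h1, h2⟩ := Real.cos_mem_Ioo_of_mem_Ioo hθ
  rw [Real.sin_eq_sqrt_one_sub_cos_sq hθ.1.le hθ.2.le,
    sqrt_one_sub_sq_mul_sqrt_one_add_div_one_sub h1.le h2]

lemma sin_mul_sqrt_one_sub_cos_div_one_add_cos {θ : ℝ} (hθ : θ ∈ Ioo 0 π) :
    Real.sin θ * √((1 - Real.cos θ) / (1 + Real.cos θ)) = 1 - Real.cos θ := by
  obtain ⟨h1, h2⟩ := Real.cos_mem_Ioo_of_mem_Ioo hθ
  have h := sqrt_one_sub_sq_mul_sqrt_one_add_div_one_sub (x := -Real.cos θ)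
    (by linarith) (by linarith)
  rw [neg_sq, ← sub_eq_add_neg, sub_neg_eq_add] at h
  rw [Real.sin_eq_sqrt_one_sub_cos_sq hθ.1.le hθ.2.le, h]

section EvenSymbol

variable {g : ℝ → ℂ} (hint : IntervalIntegrable g volume 0 (2 * π))
  (hg : IntervalIntegrable g volume 0 π) (heven : ∀ θ, g (-θ) = g θ)
  (hper : Function.Periodic g (2 * π))

include hint hg heven hper in
lemma circleCoeff_sub_add_circleCoeff_add (j k : ℕ) :
    circleCoeff g ((j : ℤ) - k) + circleCoeff g ((j : ℤ) + k + 1)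
      = (π : ℂ)⁻¹ * cosIntegral g hg ((1 + X) * (V ℝ j * V ℝ k)) := by
  rw [circleCoeff_eq_integral_cos hint heven hper, circleCoeff_eq_integral_cos hint heven hper,
    ← mul_add, ← integral_add (hg.integrableOn_Ioo_mul_ofReal (by fun_prop))
      (hg.integrableOn_Ioo_mul_ofReal (by fun_prop)), cosIntegral_apply]
  congr 1
  refine setIntegral_congr_fun measurableSet_Ioo fun θ hθ => ?_
  have hsin : Real.sin (θ / 2) ≠ 0 :=
    (Real.sin_pos_of_pos_of_lt_pi (by linarith [hθ.1]) (by linarith [hθ.2, Real.pi_pos])).ne'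
  rw [← mul_add, ← Complex.ofReal_add]
  congr 2
  push_cast
  rw [cos_sub_add_cos_add_one hsin, eval_mul, eval_mul, eval_add, eval_one, eval_X]

include hint hg heven hper in
lemma circleCoeff_sub_sub_circleCoeff_add (j k : ℕ) :
    circleCoeff g ((j : ℤ) - k) - circleCoeff g ((j : ℤ) + k + 1)
      = (π : ℂ)⁻¹ * cosIntegral g hg ((1 - X) * (W ℝ j * W ℝ k)) := by
  rw [circleCoeff_eq_integral_cos hint heven hper, circleCoeff_eq_integral_cos hint heven hper,
    ← mul_sub, ← integral_sub (hg.integrableOn_Ioo_mul_ofReal (by fun_prop))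
      (hg.integrableOn_Ioo_mul_ofReal (by fun_prop)), cosIntegral_apply]
  congr 1
  refine setIntegral_congr_fun measurableSet_Ioo fun θ hθ => ?_
  have hcos : Real.cos (θ / 2) ≠ 0 :=
    (Real.cos_pos_of_mem_Ioo ⟨by linarith [hθ.1, Real.pi_pos], by linarith [hθ.2]⟩).ne'
  rw [← mul_sub, ← Complex.ofReal_sub]
  congr 2
  push_cast
  rw [cos_sub_sub_cos_add_one hcos, eval_mul, eval_mul, eval_sub, eval_one, eval_X]

lemma det_of_apply_eq_inv_pi_mul_cosIntegral (P : ℕ → ℝ[X]) (hdeg : ∀ j, (P j).natDegree ≤ j)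
    (hcoeff : ∀ j, (P j).coeff j = 2 ^ j) (q : ℝ[X]) {n : ℕ} (A : Fin n → Fin n → ℂ)
    (hA : ∀ j k, A j k = (π : ℂ)⁻¹ * cosIntegral g hg (q * (P j * P k))) :
    (Matrix.of A).det = (π : ℂ)⁻¹ ^ n * 2 ^ (2 * ∑ i ∈ Finset.range n, i)
      * (Matrix.of fun a b : Fin n => cosIntegral g hg (q * X ^ ((a : ℕ) + b))).det := by
  have hA' : Matrix.of A = (π : ℂ)⁻¹ •
      Matrix.of fun j k : Fin n => (cosIntegral g hg ∘ₗ LinearMap.mulLeft ℝ q) (P j * P k) := by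
    ext j k
    rw [Matrix.of_apply, hA]
    rfl
  rw [hA', Matrix.det_smul, Fintype.card_fin,
    det_map_mul_eq_prod_coeff_sq_mul_det_map_X_pow _ _ hdeg]
  simp only [hcoeff, map_pow, map_ofNat, Finset.prod_pow_eq_pow_sum,
    Fin.sum_univ_eq_sum_range (fun i => i) n]
  rw [← pow_mul, mul_comm _ 2, mul_assoc]
  rfl

end EvenSymbol

lemma natCast_four_mul_sum_range_id (n : ℕ) :
    ((4 * ∑ i ∈ Finset.range n, i : ℕ) : ℤ) = 2 * (n : ℤ) ^ 2 - 2 * n := by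
  induction n with
  | zero => simp
  | succ n ih =>
    rw [Finset.sum_range_succ]
    push_cast at ih ⊢
    linear_combination ih

theorem toeplitz_plus_hankel_product_general (g : ℝ → ℂ)
    (hint : IntervalIntegrable g MeasureTheory.volume 0 (2 * π))
    (heven : ∀ θ, g (-θ) = g θ) (hper : Function.Periodic g (2 * π))
    (n : ℕ) :
    Matrix.det (Matrix.of fun j k : Fin n =>
        circleCoeff g ((j : ℤ) - (k : ℤ)) + circleCoeff g ((j : ℤ) + (k : ℤ) + 1))
      * Matrix.det (Matrix.of fun j k : Fin n =>
        circleCoeff g ((j : ℤ) - (k : ℤ)) - circleCoeff g ((j : ℤ) + (k : ℤ) + 1))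
      = ((2 : ℂ)^(2 * (n : ℤ)^2 - 2 * (n : ℤ)) / (π : ℂ)^(2 * n)) *
          hankelDet (fun x => g (Real.arccos x) * (Real.sqrt ((1 + x) / (1 - x)) : ℂ)) n *
          hankelDet (fun x => g (Real.arccos x) * (Real.sqrt ((1 - x) / (1 + x)) : ℂ)) n := by
  have hg : IntervalIntegrable g volume 0 π :=
    hint.mono_set (uIcc_subset_uIcc_left (by simp [Real.pi_pos.le, two_mul]))
  rw [det_of_apply_eq_inv_pi_mul_cosIntegral hg (V ℝ) natDegree_V_le coeff_V_self (1 + X) _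
      fun j k => circleCoeff_sub_add_circleCoeff_add hint hg heven hper j k,
    det_of_apply_eq_inv_pi_mul_cosIntegral hg (W ℝ) natDegree_W_le coeff_W_self (1 - X) _
      fun j k => circleCoeff_sub_sub_circleCoeff_add hint hg heven hper j k,
    hankelDet_eq_det_cosIntegral hg (fun x => √((1 + x) / (1 - x))) (1 + X)
      fun θ hθ => by simpa using sin_mul_sqrt_one_add_cos_div_one_sub_cos hθ,
    hankelDet_eq_det_cosIntegral hg (fun x => √((1 - x) / (1 + x))) (1 - X)
      fun θ hθ => by simpa using sin_mul_sqrt_one_sub_cos_div_one_add_cos hθ,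
    ← natCast_four_mul_sum_range_id, zpow_natCast]
  ring

/-- Product of the two Toeplitz+Hankel determinants
`det(f_{j-k} ± f_{j+k+1})` in terms of Hankel determinants with the
weights `f(e^{iθ(x)}) √((1±x)/(1∓x))` on `[-1,1]`. -/
theorem toeplitz_plus_hankel_product (g : ℝ → ℂ)
    (hint : IntervalIntegrable g MeasureTheory.volume 0 (2 * π))
    (heven : ∀ θ, g (-θ) = g θ) (hper : Function.Periodic g (2 * π))
    (hmomP : ∀ m : ℕ, IntervalIntegrable
      (fun x : ℝ => (x : ℂ)^m * (g (Real.arccos x) * (Real.sqrt ((1 + x) / (1 - x)) : ℂ)))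
      MeasureTheory.volume (-1) 1)
    (hmomM : ∀ m : ℕ, IntervalIntegrable
      (fun x : ℝ => (x : ℂ)^m * (g (Real.arccos x) * (Real.sqrt ((1 - x) / (1 + x)) : ℂ)))
      MeasureTheory.volume (-1) 1)
    (n : ℕ) (hn : 1 ≤ n) :
    Matrix.det (Matrix.of fun j k : Fin n =>
        circleCoeff g ((j : ℤ) - (k : ℤ)) + circleCoeff g ((j : ℤ) + (k : ℤ) + 1))
      * Matrix.det (Matrix.of fun j k : Fin n =>
        circleCoeff g ((j : ℤ) - (k : ℤ)) - circleCoeff g ((j : ℤ) + (k : ℤ) + 1))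
      = ((2 : ℂ)^(2 * (n : ℤ)^2 - 2 * (n : ℤ)) / (π : ℂ)^(2 * n)) *
          hankelDet (fun x => g (Real.arccos x) * (Real.sqrt ((1 + x) / (1 - x)) : ℂ)) n *
          hankelDet (fun x => g (Real.arccos x) * (Real.sqrt ((1 - x) / (1 + x)) : ℂ)) n :=
  toeplitz_plus_hankel_product_general g hint heven hper n
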